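/- Let a, b be integers with a + b = N - 1. Let λ, μ ∈ P_N, and define ℓ_i = λ_i - i, m_i = μ_i - i for i ∈ [N]. Then ∇(s_{λ/μ}) = ∑_{i ∈ [N], λ - e_i ∈ P_N} (ℓ_i + a) s_{(λ - e_i)/μ} + ∑_{i ∈ [N], μ + e_i ∈ P_N} (b - m_i) s_{λ/(μ + e_i)}. -/

import Mathlib

/-!
Since `∇` is a derivation, `∇` of the Jacobi–Trudi determinant is the sum, over the rows, of the
determinants with that row differentiated. Now `∇ h_n = (N + n - 1) h_{n-1}`, and for the entry
`h_{λ_i - μ_j - i + j}` the factor `N + λ_i - μ_j - i + j - 1` splits as `(ℓ_i + a) + (b - m_j)`.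
The row factors `ℓ_i + a` give the determinants of `(λ - e_i)/μ`. The column factors `b - m_j`
are moved from rows to columns by cofactor expansion (both sums equal `tr (adj A · X)`) and give the
determinants of `λ/(μ + e_j)`. A term whose shape is not a partition vanishes: its matrix has two
equal rows or columns, or a zero last row.
-/

open MvPolynomial

/-- The complete homogeneous symmetric polynomial `h_n` in `N` variables,
with `h_n = 0` for `n < 0`. -/
noncomputable def hh (N : ℕ) (n : ℤ) : MvPolynomial (Fin N) ℤ :=
  if 0 ≤ n then ∑ d ∈ Finset.Nat.antidiagonalTuple N n.toNat, ∏ i, X i ^ d i else 0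

/-- The diagonal derivative `∇ = ∂/∂x_1 + ⋯ + ∂/∂x_N`. -/
noncomputable def nabla (N : ℕ) (f : MvPolynomial (Fin N) ℤ) : MvPolynomial (Fin N) ℤ :=
  ∑ i, pderiv i f

/-- `a ∈ P_N`: weakly decreasing tuples of nonnegative integers. -/
def IsPar {N : ℕ} (a : Fin N → ℤ) : Prop :=
  (∀ i j : Fin N, i ≤ j → a j ≤ a i) ∧ ∀ i, 0 ≤ a i

/-- The skew Schur polynomial, defined by the Jacobi–Trudi formula. -/
noncomputable def skewSchur (N : ℕ) (lam mu : Fin N → ℤ) : MvPolynomial (Fin N) ℤ :=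
  Matrix.det (Matrix.of fun i j : Fin N => hh N (lam i - mu j - (i : ℤ) + (j : ℤ)))

/-- The tuple `e_k` with `1` in position `k` and `0` elsewhere. -/
def ee {N : ℕ} (k : Fin N) : Fin N → ℤ := fun i => if i = k then 1 else 0

instance {N : ℕ} (a : Fin N → ℤ) : Decidable (IsPar a) := by unfold IsPar; infer_instance

open Finset


namespace Derivation

variable {R A M : Type*} [CommSemiring R]

theorem leibniz_prod [CommSemiring A] [Algebra R A] [AddCommMonoid M] [Module A M] [Module R M]
    {ι : Type*} [DecidableEq ι] (D : Derivation R A M) (s : Finset ι) (f : ι → A) :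
    D (∏ i ∈ s, f i) = ∑ i ∈ s, (∏ j ∈ s.erase i, f j) • D (f i) := by
  induction s using Finset.induction_on with
  | empty => simp
  | @insert a s ha ih =>
    rw [prod_insert ha, leibniz, ih, smul_sum, sum_insert ha, erase_insert ha, add_comm]
    congr 1
    refine sum_congr rfl fun i hi => ?_
    rw [erase_insert_of_ne (ne_of_mem_of_not_mem hi ha).symm,
      prod_insert (fun h => ha (mem_of_mem_erase h)), smul_smul]

variable {n : Type*} [DecidableEq n] [Fintype n] [CommRing A] [Algebra R A]

theorem map_det (D : Derivation R A A) (M : Matrix n n A) :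
    D M.det = ∑ c, (M.updateCol c fun i => D (M i c)).det := by
  simp_rw [Matrix.det_apply, map_sum, Units.smul_def, map_zsmul, D.leibniz_prod, smul_sum]
  rw [sum_comm]
  refine sum_congr rfl fun c _ => sum_congr rfl fun σ _ => ?_
  rw [← mul_prod_erase univ _ (mem_univ c), Matrix.updateCol_self, smul_eq_mul, mul_comm,
    prod_congr rfl fun j hj => Matrix.updateCol_ne (ne_of_mem_erase hj)]

theorem map_det_eq_sum_det_updateRow (D : Derivation R A A) (M : Matrix n n A) :
    D M.det = ∑ r, (M.updateRow r fun j => D (M r j)).det := by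
  rw [← Matrix.det_transpose, D.map_det]
  refine sum_congr rfl fun r _ => ?_
  rw [Matrix.updateCol_transpose, Matrix.det_transpose]
  rfl

end Derivation

namespace Matrix

variable {n A : Type*} [DecidableEq n] [Fintype n] [CommRing A]

theorem sum_det_updateRow_eq_sum_det_updateCol (M X : Matrix n n A) :
    ∑ r, (M.updateRow r (X r)).det = ∑ c, (M.updateCol c fun i => X i c).det := by
  simp_rw [← cramer_transpose_apply, ← cramer_apply, cramer_eq_adjugate_mulVec, mulVec,
    dotProduct, ← adjugate_transpose, transpose_apply]
  exact sum_comm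

theorem sum_det_updateRow_add_mul (M B : Matrix n n A) (α β : n → A) :
    ∑ r, (M.updateRow r fun j => (α r + β j) * B r j).det
      = ∑ r, α r * (M.updateRow r (B r)).det + ∑ c, β c * (M.updateCol c fun i => B i c).det := by
  have hrow : ∀ r, (M.updateRow r fun j => (α r + β j) * B r j).det
      = α r * (M.updateRow r (B r)).det + (M.updateRow r fun j => β j * B r j).det := fun r => by
    rw [← det_updateRow_smul, ← det_updateRow_add]
    exact congrArg (fun v => (M.updateRow r v).det) (funext fun j => add_mul _ _ _)
  have hcol : ∀ c, (M.updateCol c fun i => β c * B i c).det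
      = β c * (M.updateCol c fun i => B i c).det := fun c => det_updateCol_smul M c _ _
  rw [sum_congr rfl fun r _ => hrow r, sum_add_distrib, ← sum_congr rfl fun c _ => hcol c]
  exact congrArg _ (sum_det_updateRow_eq_sum_det_updateCol M (.of fun r j => β j * B r j))

end Matrix

theorem prod_X_pow_eq_monomial_equivFunOnFinite {N : ℕ} (d : Fin N → ℕ) :
    ∏ i, (X i : MvPolynomial (Fin N) ℤ) ^ d i = monomial (Finsupp.equivFunOnFinite.symm d) 1 := by
  rw [monomial_eq, C_1, one_mul, Finsupp.prod_fintype _ _ fun _ => pow_zero _]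
  rfl

theorem coeff_hh (N : ℕ) (n : ℤ) (m : Fin N →₀ ℕ) :
    coeff m (hh N n) = if (m.degree : ℤ) = n then 1 else 0 := by
  by_cases hn : 0 ≤ n
  · simp only [hh, if_pos hn, prod_X_pow_eq_monomial_equivFunOnFinite, coeff_sum, coeff_monomial,
      Equiv.symm_apply_eq, sum_ite_eq', Nat.mem_antidiagonalTuple, Finsupp.degree_eq_sum]
    congr 1
    change (∑ i, m i = n.toNat) = _
    exact propext (by omega)
  · rw [hh, if_neg hn, coeff_zero, if_neg (by omega)]

theorem nabla_hh (N : ℕ) (n : ℤ) : nabla N (hh N n) = C ((N : ℤ) + n - 1) * hh N (n - 1) := by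
  ext m
  simp only [nabla, coeff_sum, coeff_pderiv, coeff_hh, coeff_C_mul, map_add, Finsupp.degree_single]
  by_cases hm : (m.degree : ℤ) = n - 1
  · have hdeg : ∑ i, (m i : ℤ) = n - 1 := by rw [← hm, Finsupp.degree_eq_sum]; push_cast; rfl
    simp only [Nat.cast_add, Nat.cast_one, hm, sub_add_cancel, if_true, one_mul, mul_one,
      sum_add_distrib, hdeg, sum_const, card_univ, Fintype.card_fin, Int.nsmul_eq_mul]
    ring
  · simp [show ¬ ((m.degree : ℤ) + 1 = n) by omega, hm]

theorem nabla_eq_sum_pderiv_apply (N : ℕ) (f : MvPolynomial (Fin N) ℤ) :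
    nabla N f = (∑ i, pderiv i : Derivation ℤ (MvPolynomial (Fin N) ℤ) _) f := by
  change _ = Derivation.coeFnAddMonoidHom (∑ i, pderiv i) f
  rw [map_sum, Finset.sum_apply]
  rfl

theorem nabla_det {N : ℕ} (M : Matrix (Fin N) (Fin N) (MvPolynomial (Fin N) ℤ)) :
    nabla N M.det = ∑ r, (M.updateRow r fun j => nabla N (M r j)).det := by
  simp only [nabla_eq_sum_pderiv_apply]
  exact Derivation.map_det_eq_sum_det_updateRow _ M

section Partitions

variable {N : ℕ} {lam mu : Fin N → ℤ}

noncomputable def jacobiTrudi (N : ℕ) (lam mu : Fin N → ℤ) :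
    Matrix (Fin N) (Fin N) (MvPolynomial (Fin N) ℤ) :=
  Matrix.of fun i j : Fin N => hh N (lam i - mu j - (i : ℤ) + (j : ℤ))

theorem skewSchur_eq_det_jacobiTrudi : skewSchur N lam mu = (jacobiTrudi N lam mu).det := rfl

theorem jacobiTrudi_updateRow (r : Fin N) :
    (jacobiTrudi N lam mu).updateRow r (jacobiTrudi N (lam - 1) mu r)
      = jacobiTrudi N (lam - ee r) mu := by
  ext i j
  rcases eq_or_ne i r with rfl | hir
  · simp [jacobiTrudi, ee]
  · simp [jacobiTrudi, ee, hir]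

theorem jacobiTrudi_updateCol (c : Fin N) :
    (jacobiTrudi N lam mu).updateCol c (fun i => jacobiTrudi N (lam - 1) mu i c)
      = jacobiTrudi N lam (mu + ee c) := by
  ext i j
  rcases eq_or_ne j c with rfl | hjc
  · simp only [jacobiTrudi, Pi.sub_apply, Pi.one_apply, Matrix.of_apply, Matrix.updateCol_self,
      Pi.add_apply, ee, if_true]
    ring_nf
  · simp [jacobiTrudi, ee, hjc]

theorem skewSchur_eq_zero_of_lam_sub_eq {i k : Fin N} (hik : i ≠ k)
    (h : lam i - i = lam k - k) : skewSchur N lam mu = 0 :=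
  Matrix.det_zero_of_row_eq hik <| funext fun j => by
    simp only [Matrix.of_apply]
    congr 1
    omega

theorem skewSchur_eq_zero_of_mu_sub_eq {i k : Fin N} (hik : i ≠ k)
    (h : mu i - i = mu k - k) : skewSchur N lam mu = 0 :=
  Matrix.det_zero_of_column_eq hik fun j => by
    simp only [Matrix.of_apply]
    congr 1
    omega

theorem skewSchur_eq_zero_of_forall_lt_zero (r : Fin N)
    (h : ∀ j : Fin N, lam r - mu j - r + j < 0) : skewSchur N lam mu = 0 :=
  Matrix.det_eq_zero_of_row_eq_zero r fun j => by
    rw [Matrix.of_apply, hh, if_neg (by linarith [h j])]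

theorem IsPar.sub_ee (hlam : IsPar lam) {r : Fin N} (hlt : ∀ j, r < j → lam j < lam r)
    (hpos : 0 < lam r) : IsPar (lam - ee r) := by
  refine ⟨fun i j hij => ?_, fun i => ?_⟩ <;> simp only [Pi.sub_apply, ee]
  · have := hlam.1 i j hij
    split_ifs with hj hi hi
    · omega
    · omega
    · subst hi
      linarith [hlt j (lt_of_le_of_ne hij (Ne.symm hj))]
    · omega
  · have := hlam.2 i
    split_ifs with hi
    · subst hi
      omega
    · omega

theorem IsPar.add_ee (hmu : IsPar mu) {c : Fin N} (hlt : ∀ i, i < c → mu c < mu i) :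
    IsPar (mu + ee c) := by
  refine ⟨fun i j hij => ?_, fun i => ?_⟩ <;> simp only [Pi.add_apply, ee]
  · have := hmu.1 i j hij
    split_ifs with hj hi
    · omega
    · subst hj
      linarith [hlt i (lt_of_le_of_ne hij hi)]
    · omega
    · omega
  · have := hmu.2 i
    split_ifs <;> omega

theorem skewSchur_sub_ee_eq_zero (hlam : IsPar lam) (hmu : IsPar mu) {r : Fin N}
    (h : ¬ IsPar (lam - ee r)) : skewSchur N (lam - ee r) mu = 0 := by
  by_cases hr : (r : ℕ) + 1 < N
  · set s : Fin N := ⟨r + 1, hr⟩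
    have hrs : r < s := Fin.lt_def.2 (Nat.lt_succ_self _)
    rcases (hlam.1 r s hrs.le).eq_or_lt with heq | hlt
    · refine skewSchur_eq_zero_of_lam_sub_eq hrs.ne ?_
      simp only [Pi.sub_apply, ee, if_neg hrs.ne', if_true, sub_zero, heq, s, Nat.cast_add,
        Nat.cast_one]
      ring
    · refine absurd (hlam.sub_ee (fun j hj => (hlam.1 s j ?_).trans_lt hlt) ?_) h
      · exact Fin.le_def.2 (Fin.lt_def.1 hj)
      · linarith [hlam.2 s]
  · have hlast : ∀ j : Fin N, j ≤ r := fun j => Fin.le_def.2 (by omega)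
    have hzero : lam r = 0 := by
      by_contra hne
      exact h (hlam.sub_ee (fun j hj => absurd hj (not_lt.2 (hlast j)))
        (lt_of_le_of_ne (hlam.2 r) (Ne.symm hne)))
    refine skewSchur_eq_zero_of_forall_lt_zero r fun j => ?_
    have := hmu.2 j
    have := Fin.le_def.1 (hlast j)
    simp only [Pi.sub_apply, ee, hzero, if_true]
    omega

theorem skewSchur_add_ee_eq_zero (hmu : IsPar mu) {c : Fin N} (h : ¬ IsPar (mu + ee c)) :
    skewSchur N lam (mu + ee c) = 0 := by
  by_cases hc : 0 < (c : ℕ)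
  · set p : Fin N := ⟨c - 1, by omega⟩
    have hpc : p < c := Fin.lt_def.2 (by simp [p]; omega)
    rcases (hmu.1 p c hpc.le).eq_or_lt with heq | hlt
    · refine skewSchur_eq_zero_of_mu_sub_eq hpc.ne ?_
      simp only [Pi.add_apply, ee, if_neg hpc.ne, if_true, add_zero, heq, p]
      omega
    · refine absurd (hmu.add_ee fun i hi => hlt.trans_le (hmu.1 i p ?_)) h
      exact Fin.le_def.2 (by have := Fin.lt_def.1 hi; simp [p]; omega)
  · exact absurd (hmu.add_ee fun i hi => absurd (Fin.lt_def.1 hi) (by omega)) h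

end Partitions

theorem nabla_skewSchur (N : ℕ) (a b : ℤ) (hab : a + b = (N : ℤ) - 1)
    (lam mu : Fin N → ℤ) (hlam : IsPar lam) (hmu : IsPar mu) :
    nabla N (skewSchur N lam mu) =
      (∑ i ∈ Finset.univ.filter (fun i : Fin N => IsPar (lam - ee i)),
        C ((lam i - ((i : ℤ) + 1)) + a) * skewSchur N (lam - ee i) mu)
      + ∑ i ∈ Finset.univ.filter (fun i : Fin N => IsPar (mu + ee i)),
        C (b - (mu i - ((i : ℤ) + 1))) * skewSchur N lam (mu + ee i) := by
  have hentry : ∀ i j, nabla N (jacobiTrudi N lam mu i j)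
      = (C (lam i - ((i : ℤ) + 1) + a) + C (b - (mu j - ((j : ℤ) + 1))))
          * jacobiTrudi N (lam - 1) mu i j := fun i j => by
    simp only [jacobiTrudi, Matrix.of_apply, nabla_hh, ← C_add, Pi.sub_apply, Pi.one_apply]
    congr 2 <;> omega
  rw [skewSchur_eq_det_jacobiTrudi, nabla_det]
  simp only [hentry]
  rw [Matrix.sum_det_updateRow_add_mul]
  simp only [jacobiTrudi_updateRow, jacobiTrudi_updateCol, ← skewSchur_eq_det_jacobiTrudi]
  congr 1 <;> refine (sum_filter_of_ne fun i _ hne => ?_).symm <;> by_contra hnot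
  · exact hne (by rw [skewSchur_sub_ee_eq_zero hlam hmu hnot, mul_zero])
  · exact hne (by rw [skewSchur_add_ee_eq_zero hmu hnot, mul_zero])
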